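/- arXiv:1408.1533 — 2 statements merged into one kernel-verified Lean document; each statement's English description precedes it below -/
import Mathlib

section
/- Let k ≥ 2 be an integer. There is a constant C = C(k) > 0 such that for all integers N ≥ 2 and all positive integers i, the exponential sum T_i(α) = ∑_{n ≤ N} b_{2^{i-1},2^i}(n) e(αn) satisfies ∫₀¹ |T_i(α)|² dα ≤ C · 2^{-i(k-1)} N. -/
noncomputable def e (x : ℝ) : ℂ := Complex.exp (2 * Real.pi * Complex.I * x)

open Classical in
/-- `b k y z n = ∑_{d^k ∣ n, y ≤ d < z} μ(d)` for `n ≥ 1`, and `b k y z 0 = 0`. -/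
noncomputable def b (k : ℕ) (y z : ℝ) (n : ℕ) : ℤ :=
  ∑ d ∈ (Finset.Icc 1 n).filter (fun d : ℕ => y ≤ (d : ℝ) ∧ (d : ℝ) < z ∧ d ^ k ∣ n),
    ArithmeticFunction.moebius d

/-- The exponential sum `T_i(α) = ∑_{n ≤ N} b_{2^{i-1},2^i}(n) e(αn)`. -/
noncomputable def T (k N i : ℕ) (α : ℝ) : ℂ :=
  ∑ n ∈ Finset.Icc 1 N, (b k ((2 : ℝ) ^ (i - 1)) ((2 : ℝ) ^ i) n : ℂ) * e (α * n)

/-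
Parseval's identity turns the integral into `∑_{n ≤ N} b(n)²`, and `|b(n)|` is at most the number
`c(n)` of `d ∈ [D, 2D)` with `d^k ∣ n`, where `D = 2^{i-1}`. Expanding `c(n)²` over pairs `(a, b)`,
the `n ≤ N` divisible by `a^k` and `b^k` are multiples of `lcm(a, b)^k = (ab / gcd(a, b))^k`, so
`∑ c(n)² ≤ N D^{-2k} ∑_{a,b} gcd(a, b)^k`. Bounding `gcd(a, b)^k` by the sum of `g^k` over the
common divisors `g ≤ 2D`, and using that `[D, 2D)` holds at most `3D / g` multiples of `g`, gives
`∑_{a,b} gcd(a, b)^k ≤ 9 (2D)^{k-1} D²`, hence `∑ c(n)² ≪ N / D^{k-1}`.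
-/

open Finset

@[fun_prop]
lemma continuous_e : Continuous e := by
  unfold e
  fun_prop

lemma e_mul_conj_e (x y : ℝ) : e x * starRingEnd ℂ (e y) = e (x - y) := by
  simp only [e, ← Complex.exp_conj, ← Complex.exp_add, map_mul, Complex.conj_I,
    Complex.conj_ofReal, map_ofNat]
  push_cast
  ring_nf

lemma integral_e_int_mul (m : ℤ) : ∫ α in (0 : ℝ)..1, e (α * m) = if m = 0 then 1 else 0 := by
  split_ifs with hm
  · simp [hm, e]
  have hc : 2 * Real.pi * Complex.I * m ≠ 0 := by
    simp [Real.pi_ne_zero, Complex.I_ne_zero, hm]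
  have he : ∀ α : ℝ, e (α * m) = Complex.exp (2 * Real.pi * Complex.I * m * α) := fun α => by
    simp only [e]; push_cast; ring_nf
  have hperiod : Complex.exp (2 * Real.pi * Complex.I * m) = 1 := by
    rw [← Complex.exp_int_mul_two_pi_mul_I m]; ring_nf
  simp [he, integral_exp_mul_complex hc, hperiod]

lemma integral_e_mul_conj_e (n m : ℕ) :
    ∫ α in (0 : ℝ)..1, e (α * n) * starRingEnd ℂ (e (α * m)) = if n = m then 1 else 0 := by
  have hprod : ∀ α : ℝ, e (α * n) * starRingEnd ℂ (e (α * m)) = e (α * ((n - m : ℤ) : ℝ)) :=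
    fun α => by rw [e_mul_conj_e]; push_cast; ring_nf
  simp_rw [hprod, integral_e_int_mul, sub_eq_zero, Nat.cast_inj]

lemma integral_norm_sum_mul_e_sq (s : Finset ℕ) (c : ℕ → ℂ) :
    ∫ α in (0 : ℝ)..1, ‖∑ n ∈ s, c n * e (α * n)‖ ^ 2 = ∑ n ∈ s, ‖c n‖ ^ 2 := by
  have hexpand : ∀ α : ℝ, ((‖∑ n ∈ s, c n * e (α * n)‖ ^ 2 : ℝ) : ℂ) = ∑ n ∈ s, ∑ m ∈ s,
      c n * starRingEnd ℂ (c m) * (e (α * n) * starRingEnd ℂ (e (α * m))) := fun α => by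
    rw [Complex.ofReal_pow, ← Complex.mul_conj', map_sum, sum_mul_sum]
    refine sum_congr rfl fun n _ => sum_congr rfl fun m _ => ?_
    rw [map_mul]; ring
  apply Complex.ofReal_injective
  rw [← intervalIntegral.integral_ofReal]
  simp_rw [hexpand]
  have hrow : ∀ n ∈ s, ∫ α in (0 : ℝ)..1, ∑ m ∈ s,
      c n * starRingEnd ℂ (c m) * (e (α * n) * starRingEnd ℂ (e (α * m))) = ‖c n‖ ^ 2 := by
    intro n hn
    rw [intervalIntegral.integral_finsetSum fun m _ =>
      (by fun_prop : Continuous _).intervalIntegrable _ _]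
    simp_rw [intervalIntegral.integral_const_mul, integral_e_mul_conj_e, mul_ite, mul_one,
      mul_zero, sum_ite_eq, if_pos hn, Complex.mul_conj']
  rw [intervalIntegral.integral_finsetSum fun n _ =>
      (by fun_prop : Continuous _).intervalIntegrable _ _,
    sum_congr rfl hrow]
  norm_cast

lemma card_filter_dvd_Icc_mul_le (N L : ℕ) : #{n ∈ Icc 1 N | L ∣ n} * L ≤ N := by
  rw [← zero_add 1, Icc_add_one_left_eq_Ioc, Nat.Ioc_filter_dvd_card_eq_div]
  exact Nat.div_mul_le_self N L

lemma card_filter_dvd_Ioc_mul_le (a L g : ℕ) : #{x ∈ Ioc a (a + L) | g ∣ x} * g ≤ L + g := by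
  have hsplit := Ioc_union_Ioc_eq_Ioc (Nat.zero_le a) (Nat.le_add_right a L)
  have hcard : a / g + #{x ∈ Ioc a (a + L) | g ∣ x} = (a + L) / g := by
    rw [← Nat.Ioc_filter_dvd_card_eq_div, ← Nat.Ioc_filter_dvd_card_eq_div, ← hsplit, filter_union,
      card_union_of_disjoint (disjoint_filter_filter (Ioc_disjoint_Ioc_of_le le_rfl))]
  rcases Nat.eq_zero_or_pos g with rfl | hg
  · simp
  have hupper := hcard ▸ Nat.div_mul_le_self (a + L) g
  have hlower := Nat.lt_div_mul_add (a := a) hg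
  rw [add_mul] at hupper
  omega

lemma sum_sq_card_filter {α β : Type*} (s : Finset α) (t : Finset β) (P : α → β → Prop)
    [∀ a n, Decidable (P a n)] :
    ∑ n ∈ t, #{d ∈ s | P d n} ^ 2 = ∑ a ∈ s, ∑ a' ∈ s, #{n ∈ t | P a n ∧ P a' n} := by
  simp_rw [sq, card_filter, sum_mul_sum, ite_zero_mul_ite_zero, mul_one]
  rw [sum_comm]
  exact sum_congr rfl fun a _ => sum_comm

lemma card_filter_pow_dvd_mul_le (N a b k : ℕ) :
    #{n ∈ Icc 1 N | a ^ k ∣ n ∧ b ^ k ∣ n} * (a * b) ^ k ≤ N * Nat.gcd a b ^ k := by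
  have hsub : {n ∈ Icc 1 N | a ^ k ∣ n ∧ b ^ k ∣ n} ⊆ {n ∈ Icc 1 N | Nat.lcm a b ^ k ∣ n} :=
    monotone_filter_right _ fun n _ hn => Nat.pow_lcm_pow ▸ Nat.lcm_dvd hn.1 hn.2
  rw [← Nat.gcd_mul_lcm a b, mul_comm (Nat.gcd a b), mul_pow, ← mul_assoc]
  gcongr
  exact (Nat.mul_le_mul_right _ (card_le_card hsub)).trans (card_filter_dvd_Icc_mul_le N _)

lemma sum_sum_gcd_pow_le (D k : ℕ) (hD : 0 < D) (hk : 2 ≤ k) :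
    ∑ a ∈ Ico D (2 * D), ∑ b ∈ Ico D (2 * D), Nat.gcd a b ^ k ≤ 9 * 2 ^ (k - 1) * D ^ (k + 1) := by
  set S := Ico D (2 * D)
  have hmultiples : ∀ g ∈ Icc 1 (2 * D), #{a ∈ S | g ∣ a} * g ≤ 3 * D := by
    intro g hg
    have hS : S ⊆ Ioc (D - 1) (D - 1 + D) := fun d hd => by
      simp only [S, mem_Ico, mem_Ioc] at hd ⊢; omega
    have hIoc := card_filter_dvd_Ioc_mul_le (D - 1) D g
    have hmono := Nat.mul_le_mul_right g (card_le_card (filter_subset_filter (g ∣ ·) hS))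
    simp only [mem_Icc] at hg
    omega
  have hgcd : ∀ a ∈ S, ∀ b ∈ S,
      Nat.gcd a b ^ k ≤ ∑ g ∈ Icc 1 (2 * D), if g ∣ a ∧ g ∣ b then g ^ k else 0 := by
    intro a ha b _
    have hpos : 0 < a := hD.trans_le (mem_Ico.1 ha).1
    have hmem : Nat.gcd a b ∈ Icc 1 (2 * D) := mem_Icc.2
      ⟨Nat.gcd_pos_of_pos_left b hpos, (Nat.gcd_le_left b hpos).trans (mem_Ico.1 ha).2.le⟩
    simpa [Nat.gcd_dvd_left, Nat.gcd_dvd_right] using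
      single_le_sum (f := fun g => if g ∣ a ∧ g ∣ b then g ^ k else 0) (by simp) hmem
  have hswap : ∑ a ∈ S, ∑ b ∈ S, ∑ g ∈ Icc 1 (2 * D), (if g ∣ a ∧ g ∣ b then g ^ k else 0)
      = ∑ g ∈ Icc 1 (2 * D), #{a ∈ S | g ∣ a} * #{b ∈ S | g ∣ b} * g ^ k := by
    simp_rw [card_filter, sum_mul_sum, sum_mul, ite_zero_mul_ite_zero, ite_mul, one_mul, zero_mul]
    exact (sum_congr rfl fun a _ => sum_comm).trans sum_comm
  have hterm : ∀ g ∈ Icc 1 (2 * D), #{a ∈ S | g ∣ a} * #{b ∈ S | g ∣ b} * g ^ k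
      ≤ 3 * D * (3 * D) * (2 * D) ^ (k - 2) := by
    intro g hg
    calc #{a ∈ S | g ∣ a} * #{b ∈ S | g ∣ b} * g ^ k
        = #{a ∈ S | g ∣ a} * g * (#{a ∈ S | g ∣ a} * g) * g ^ (k - 2) := by
          rw [← Nat.sub_add_cancel hk, pow_add, Nat.add_sub_cancel]; ring
      _ ≤ 3 * D * (3 * D) * (2 * D) ^ (k - 2) := by
          have hg' := hmultiples g hg
          exact Nat.mul_le_mul (Nat.mul_le_mul hg' hg') (Nat.pow_le_pow_left (mem_Icc.1 hg).2 _)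
  calc ∑ a ∈ S, ∑ b ∈ S, Nat.gcd a b ^ k
      ≤ ∑ a ∈ S, ∑ b ∈ S, ∑ g ∈ Icc 1 (2 * D), (if g ∣ a ∧ g ∣ b then g ^ k else 0) :=
        sum_le_sum fun a ha => sum_le_sum fun b hb => hgcd a ha b hb
    _ ≤ ∑ g ∈ Icc 1 (2 * D), 3 * D * (3 * D) * (2 * D) ^ (k - 2) := hswap ▸ sum_le_sum hterm
    _ = 9 * 2 ^ (k - 1) * D ^ (k + 1) := by
        rw [sum_const, Nat.card_Icc, smul_eq_mul, Nat.add_sub_cancel]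
        obtain ⟨j, rfl⟩ := Nat.exists_eq_add_of_le hk
        rw [show 2 + j - 2 = j by omega, show 2 + j - 1 = j + 1 by omega]
        ring

lemma sum_sq_card_pow_dvd_mul_le (k N D : ℕ) (hk : 2 ≤ k) (hD : 0 < D) :
    (∑ n ∈ Icc 1 N, #{d ∈ Ico D (2 * D) | d ^ k ∣ n} ^ 2) * D ^ (k - 1)
      ≤ 9 * 2 ^ (k - 1) * N := by
  set S := Ico D (2 * D)
  have hpair : ∀ a ∈ S, ∀ b ∈ S,
      #{n ∈ Icc 1 N | a ^ k ∣ n ∧ b ^ k ∣ n} * D ^ (2 * k) ≤ N * Nat.gcd a b ^ k := by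
    intro a ha b hb
    have hDab : D ^ (2 * k) ≤ (a * b) ^ k := by
      rw [mul_comm, pow_mul', sq]
      exact Nat.pow_le_pow_left (Nat.mul_le_mul (mem_Ico.1 ha).1 (mem_Ico.1 hb).1) k
    exact (Nat.mul_le_mul_left _ hDab).trans (card_filter_pow_dvd_mul_le N a b k)
  have hsplit : D ^ (2 * k) = D ^ (k - 1) * D ^ (k + 1) := by rw [← pow_add]; congr 1; omega
  have key : (∑ n ∈ Icc 1 N, #{d ∈ S | d ^ k ∣ n} ^ 2) * D ^ (k - 1) * D ^ (k + 1)
      ≤ 9 * 2 ^ (k - 1) * N * D ^ (k + 1) :=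
    calc (∑ n ∈ Icc 1 N, #{d ∈ S | d ^ k ∣ n} ^ 2) * D ^ (k - 1) * D ^ (k + 1)
        = ∑ a ∈ S, ∑ b ∈ S, #{n ∈ Icc 1 N | a ^ k ∣ n ∧ b ^ k ∣ n} * D ^ (2 * k) := by
          rw [mul_assoc, ← hsplit, sum_sq_card_filter, sum_mul]
          simp_rw [sum_mul]
      _ ≤ ∑ a ∈ S, ∑ b ∈ S, N * Nat.gcd a b ^ k :=
          sum_le_sum fun a ha => sum_le_sum fun b hb => hpair a ha b hb
      _ = N * ∑ a ∈ S, ∑ b ∈ S, Nat.gcd a b ^ k := by simp_rw [mul_sum]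
      _ ≤ N * (9 * 2 ^ (k - 1) * D ^ (k + 1)) := by gcongr; exact sum_sum_gcd_pow_le D k hD hk
      _ = 9 * 2 ^ (k - 1) * N * D ^ (k + 1) := by ring
  exact Nat.le_of_mul_le_mul_right key (by positivity)

lemma b_natCast_eq_sum (k y z n : ℕ) (hk : k ≠ 0) (hy : 0 < y) (hn : 0 < n) :
    b k y z n = ∑ d ∈ Ico y z with d ^ k ∣ n, ArithmeticFunction.moebius d := by
  refine sum_congr (ext fun d => ?_) fun _ _ => rfl
  simp only [mem_filter, mem_Icc, mem_Ico, Nat.cast_le, Nat.cast_lt]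
  constructor
  · rintro ⟨-, hyd, hdz, hdvd⟩
    exact ⟨⟨hyd, hdz⟩, hdvd⟩
  · rintro ⟨⟨hyd, hdz⟩, hdvd⟩
    exact ⟨⟨hy.trans_le hyd, (Nat.le_self_pow hk d).trans (Nat.le_of_dvd hn hdvd)⟩, hyd, hdz, hdvd⟩

lemma abs_sum_moebius_le_card (s : Finset ℕ) : |∑ d ∈ s, ArithmeticFunction.moebius d| ≤ #s := by
  simpa using (abs_sum_le_sum_abs _ s).trans
    (sum_le_card_nsmul s _ 1 fun d _ => ArithmeticFunction.abs_moebius_le_one)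

lemma norm_b_natCast_le_card (k y z n : ℕ) (hk : k ≠ 0) (hy : 0 < y) (hn : 0 < n) :
    ‖(b k y z n : ℂ)‖ ≤ #{d ∈ Ico y z | d ^ k ∣ n} := by
  rw [Complex.norm_intCast, b_natCast_eq_sum k y z n hk hy hn]
  exact_mod_cast abs_sum_moebius_le_card _

lemma two_rpow_neg_succ_mul_sub_one (j : ℕ) {k : ℕ} (hk : 1 ≤ k) :
    (2 : ℝ) ^ (-((j + 1 : ℕ) : ℝ) * ((k : ℝ) - 1))
      = ((2 : ℝ) ^ (k - 1) * ((2 : ℝ) ^ j) ^ (k - 1))⁻¹ := by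
  rw [← Nat.cast_pred hk, neg_mul, ← Nat.cast_mul, Real.rpow_neg zero_le_two,
    Real.rpow_natCast, ← pow_mul, ← pow_add]
  congr 2
  ring

theorem Ti_L2_bound (k : ℕ) (hk : 2 ≤ k) :
    ∃ C : ℝ, 0 < C ∧ ∀ N : ℕ, 2 ≤ N → ∀ i : ℕ, 1 ≤ i →
      (∫ α in (0:ℝ)..1, ‖T k N i α‖ ^ 2)
        ≤ C * (2 : ℝ) ^ (-(i : ℝ) * ((k : ℝ) - 1)) * (N : ℝ) := by
  refine ⟨9 * 4 ^ (k - 1), by positivity, fun N _ i hi => ?_⟩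
  obtain ⟨j, rfl⟩ : ∃ j, i = j + 1 := ⟨i - 1, by omega⟩
  have hb : ∀ n ∈ Icc 1 N, ‖(b k ((2 : ℝ) ^ (j + 1 - 1)) ((2 : ℝ) ^ (j + 1)) n : ℂ)‖ ^ 2
      ≤ (#{d ∈ Ico (2 ^ j) (2 * 2 ^ j) | d ^ k ∣ n} : ℝ) ^ 2 := fun n hn => by
    have hnorm := norm_b_natCast_le_card k (2 ^ j) (2 * 2 ^ j) n (by omega) (by positivity)
      (mem_Icc.1 hn).1
    push_cast at hnorm
    rw [Nat.add_sub_cancel, pow_succ' (2 : ℝ)]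
    exact pow_le_pow_left₀ (norm_nonneg _) hnorm 2
  have hcount := sum_sq_card_pow_dvd_mul_le k N (2 ^ j) hk (by positivity)
  calc (∫ α in (0:ℝ)..1, ‖T k N (j + 1) α‖ ^ 2)
      = ∑ n ∈ Icc 1 N, ‖(b k ((2 : ℝ) ^ (j + 1 - 1)) ((2 : ℝ) ^ (j + 1)) n : ℂ)‖ ^ 2 :=
        integral_norm_sum_mul_e_sq _ _
    _ ≤ ∑ n ∈ Icc 1 N, (#{d ∈ Ico (2 ^ j) (2 * 2 ^ j) | d ^ k ∣ n} : ℝ) ^ 2 := sum_le_sum hb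
    _ ≤ 9 * 2 ^ (k - 1) * N / ((2 : ℝ) ^ j) ^ (k - 1) := by
        rw [le_div_iff₀ (by positivity)]
        exact_mod_cast hcount
    _ = 9 * 4 ^ (k - 1) * (2 : ℝ) ^ (-((j + 1 : ℕ) : ℝ) * ((k : ℝ) - 1)) * N := by
        rw [two_rpow_neg_succ_mul_sub_one j (by omega), show (4 : ℝ) = 2 * 2 by norm_num, mul_pow]
        field_simp
end

section
/- Let k ≥ 2 be an integer. There is a constant C = C(k) > 0 such that for all real K ≥ 1, all integers N ≥ 1, M with 1 ≤ M ≤ N+K, all integers d with 1 ≤ d ≤ N+K, and all real α, the congruence-restricted kernel E_{N,K,M,d}(α) = ∑_{|n| ≤ N+K, n ≡ M (mod d)} min(1, (N+K−|n|)/K) e(αn) satisfies |E_{N,K,M,d}(α)| ≤ C · (min((N+K)/d, 1/‖dα‖, d/(K‖dα‖²)) + 1), with the convention that the minimum is (N+K)/d when dα ∈ ℤ. -/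
/-- Distance from `x` to the nearest integer. -/
noncomputable def nint (x : ℝ) : ℝ := |x - (round x : ℤ)|

open Classical in
/-- The congruence-restricted smoothed kernel
`E_{N,K,M,d}(α) = ∑_{|n| ≤ N+K, n ≡ M (mod d)} min(1, (N+K-|n|)/K) e(αn)`. -/
noncomputable def Eker (N : ℕ) (K : ℝ) (M d : ℤ) (α : ℝ) : ℂ :=
  ∑ n ∈ (Finset.Icc (-(⌊(N : ℝ) + K⌋)) ⌊(N : ℝ) + K⌋).filter
      (fun n : ℤ => d ∣ (n - M)),
    ((min 1 (((N : ℝ) + K - |(n : ℝ)|) / K) : ℝ) : ℂ) * e (α * (n : ℝ))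

open Finset
open scoped fwdDiff

lemma Int.sum_Ico_fwdDiff {G : Type*} [AddCommGroup G] (g : ℤ → G) {a b : ℤ} (hab : a ≤ b) :
    ∑ m ∈ Ico a b, Δ_[1] g m = g b - g a := by
  induction b, hab using Int.leInduction with
  | base => simp
  | succ b hb ih =>
    rw [Ico_add_one_right_eq_Icc, ← Ico_insert_right hb, sum_insert (by simp), ih, fwdDiff]
    abel

lemma Int.sum_Icc_fwdDiff_le {g : ℤ → ℝ} {B : ℝ} (h0 : ∀ m, 0 ≤ g m) (hB : ∀ m, g m ≤ B)
    (a b : ℤ) : ∑ m ∈ Icc a b, Δ_[1] g m ≤ B := by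
  rcases le_or_gt a (b + 1) with hab | hab
  · rw [← Ico_add_one_right_eq_Icc, Int.sum_Ico_fwdDiff g hab]
    linarith [hB (b + 1), h0 a]
  · simpa [Icc_eq_empty_of_lt (show b < a by omega)] using (h0 a).trans (hB a)

lemma Int.abs_le_of_abs_add_mul_le {M d m L : ℤ} (hd : 1 ≤ d) (h : |M + d * m| ≤ L) :
    |m| ≤ L + |M| := by
  have hdm : |m| ≤ |d * m| := by
    rw [abs_mul, abs_of_pos (by omega : 0 < d)]; exact le_mul_of_one_le_left (abs_nonneg m) hd
  have := abs_sub (M + d * m) M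
  rw [add_sub_cancel_left] at this
  omega

lemma card_Icc_ceil_floor_le {u v : ℝ} (huv : u ≤ v) : (#(Icc ⌈u⌉ ⌊v⌋) : ℝ) ≤ v - u + 1 := by
  have h : ⌈u⌉ ≤ ⌊v⌋ + 1 := by
    have : (⌈u⌉ : ℝ) < ⌊v⌋ + 2 := by linarith [Int.ceil_lt_add_one u, Int.lt_floor_add_one v]
    have : ⌈u⌉ < ⌊v⌋ + 2 := by exact_mod_cast this
    omega
  rw [← Int.cast_natCast, Int.card_Icc_of_le _ _ h]
  push_cast
  linarith [Int.floor_le v, Int.le_ceil u]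

lemma e_add (x y : ℝ) : e (x + y) = e x * e y := by
  simp only [e, Complex.ofReal_add, mul_add, Complex.exp_add]

lemma norm_e (x : ℝ) : ‖e x‖ = 1 := by
  rw [e, show 2 * Real.pi * Complex.I * x = ((2 * Real.pi * x : ℝ) : ℂ) * Complex.I by
    push_cast; ring]
  exact Complex.norm_exp_ofReal_mul_I _

lemma e_int (n : ℤ) : e n = 1 := by
  rw [e, show 2 * Real.pi * Complex.I * ((n : ℝ) : ℂ) = n * (2 * Real.pi * Complex.I) by
    push_cast; ring]
  exact Complex.exp_int_mul_two_pi_mul_I n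

-- `‖1 - e θ‖ = 2 |sin (π θ)|`, and Jordan's inequality `2 |x| / π ≤ |sin x|` for `|x| ≤ π / 2`.
lemma four_mul_nint_le_norm_one_sub_e (β : ℝ) : 4 * nint β ≤ ‖1 - e β‖ := by
  set θ := β - (round β : ℤ)
  have hθ : |Real.pi * θ| ≤ Real.pi / 2 := by
    rw [abs_mul, abs_of_pos Real.pi_pos]
    nlinarith [abs_sub_round β, Real.pi_pos]
  have he : e β = Complex.exp (Complex.I * ((2 * (Real.pi * θ) : ℝ) : ℂ)) := by
    rw [show β = θ + (round β : ℤ) by simp [θ], e_add, e_int, mul_one, e]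
    congr 1
    push_cast
    ring
  rw [he, norm_sub_rev, Complex.norm_exp_I_mul_ofReal_sub_one, mul_div_cancel_left₀ _ two_ne_zero,
    norm_mul, Real.norm_two, Real.norm_eq_abs]
  have := Real.mul_abs_le_abs_sin hθ
  rw [abs_mul, abs_of_pos Real.pi_pos, ← mul_assoc, div_mul_cancel₀ _ Real.pi_ne_zero] at this
  change 4 * |θ| ≤ _
  linarith

lemma nint_pos {x : ℝ} (hx : ¬∃ z : ℤ, x = z) : 0 < nint x :=
  abs_pos.mpr fun h => hx ⟨round x, sub_eq_zero.mp h⟩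

noncomputable def expSum (f : ℤ → ℝ) (β : ℝ) (a b : ℤ) : ℂ :=
  ∑ m ∈ Icc a b, (f m : ℂ) * e (β * m)

section expSum

variable (f : ℤ → ℝ) (β : ℝ) {a b : ℤ}

lemma norm_expSum_le : ‖expSum f β a b‖ ≤ ∑ m ∈ Icc a b, |f m| := by
  refine (norm_sum_le _ _).trans_eq (sum_congr rfl fun m _ => ?_)
  rw [norm_mul, norm_e, mul_one, Complex.norm_real, Real.norm_eq_abs]

lemma one_sub_e_mul_expSum (ha : f a = 0) (hb : f (b + 1) = 0) :
    (1 - e β) * expSum f β a b = e β * expSum (Δ_[1] f) β a b := by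
  set g : ℤ → ℂ := fun m => (f m : ℂ) * e (β * m)
  have hterm : ∀ m : ℤ, e β * ((Δ_[1] f m : ℝ) : ℂ) * e (β * m) = Δ_[1] g m + (1 - e β) * g m := by
    intro m
    simp only [g, fwdDiff, Int.cast_add, Int.cast_one, mul_add, mul_one, e_add]
    push_cast
    ring
  rcases le_or_gt a (b + 1) with hab | hab
  · simp only [expSum, mul_sum, ← mul_assoc, hterm, sum_add_distrib, ← Ico_add_one_right_eq_Icc,
      Int.sum_Ico_fwdDiff g hab]
    simp [g, ha, hb, mul_assoc]
  · simp [expSum, Icc_eq_empty_of_lt (show b < a by omega)]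

lemma norm_one_sub_e_mul_expSum_le (ha : f a = 0) (hb : f (b + 1) = 0) :
    ‖(1 - e β) * expSum f β a b‖ ≤ ∑ m ∈ Icc a b, |Δ_[1] f m| := by
  rw [one_sub_e_mul_expSum f β ha hb, norm_mul, norm_e, one_mul]
  exact norm_expSum_le _ β

lemma norm_one_sub_e_sq_mul_expSum_le (ha : f a = 0) (ha' : f (a + 1) = 0)
    (hb : f (b + 1) = 0) (hb' : f (b + 2) = 0) :
    ‖(1 - e β) ^ 2 * expSum f β a b‖ ≤ ∑ m ∈ Icc a b, |Δ_[1] (Δ_[1] f) m| := by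
  rw [sq, mul_assoc, one_sub_e_mul_expSum f β ha hb, mul_left_comm, norm_mul, norm_e, one_mul]
  refine norm_one_sub_e_mul_expSum_le _ β ?_ ?_ <;> simp [fwdDiff, ha, ha', hb, hb', add_assoc]

lemma norm_expSum_le_min (hf : ∀ m, f m ≠ 0 → m ∈ Icc (a + 2) b) {B D : ℝ}
    (hB : ∑ m ∈ Icc a b, |Δ_[1] f m| ≤ B) (hD : ∑ m ∈ Icc a b, |Δ_[1] (Δ_[1] f) m| ≤ D)
    (hβ : 0 < nint β) :
    ‖expSum f β a b‖ ≤ min (B / (4 * nint β)) (D / (4 * nint β) ^ 2) := by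
  have hf0 : ∀ m, (m < a + 2 ∨ b < m) → f m = 0 := fun m hm =>
    by_contra fun h => by have := mem_Icc.mp (hf m h); omega
  have h := four_mul_nint_le_norm_one_sub_e β
  refine le_min ((le_div_iff₀ (by positivity)).mpr ?_) ((le_div_iff₀ (by positivity)).mpr ?_)
  · calc ‖expSum f β a b‖ * (4 * nint β) ≤ ‖(1 - e β) * expSum f β a b‖ := by
          rw [norm_mul, mul_comm]; gcongr
      _ ≤ B := (norm_one_sub_e_mul_expSum_le f β (hf0 _ (by omega)) (hf0 _ (by omega))).trans hB
  · calc ‖expSum f β a b‖ * (4 * nint β) ^ 2 ≤ ‖(1 - e β) ^ 2 * expSum f β a b‖ := by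
          rw [norm_mul, norm_pow, mul_comm]; gcongr
      _ ≤ D := (norm_one_sub_e_sq_mul_expSum_le f β (hf0 _ (by omega)) (hf0 _ (by omega))
          (hf0 _ (by omega)) (hf0 _ (by omega))).trans hD

end expSum

noncomputable def trapezoid (X K t : ℝ) : ℝ := max 0 (min 1 ((X - |t|) / K))

section trapezoid

variable {X K : ℝ}

lemma trapezoid_nonneg (t : ℝ) : 0 ≤ trapezoid X K t := le_max_left _ _

lemma trapezoid_le_one (t : ℝ) : trapezoid X K t ≤ 1 :=
  max_le zero_le_one (min_le_left _ _)

lemma trapezoid_eq_zero (hK : 0 ≤ K) {t : ℝ} (ht : X ≤ |t|) : trapezoid X K t = 0 :=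
  max_eq_left <| (min_le_right _ _).trans <| div_nonpos_of_nonpos_of_nonneg (by linarith) hK

lemma abs_lt_of_trapezoid_ne_zero (hK : 0 ≤ K) {t : ℝ} (ht : trapezoid X K t ≠ 0) : |t| < X :=
  not_le.mp fun h => ht (trapezoid_eq_zero hK h)

lemma abs_le_floor_of_trapezoid_ne_zero (hK : 0 ≤ K) {n : ℤ} (hn : trapezoid X K n ≠ 0) :
    |n| ≤ ⌊X⌋ :=
  Int.le_floor.mpr (by push_cast; exact (abs_lt_of_trapezoid_ne_zero hK hn).le)

lemma trapezoid_eq_min (hK : 0 ≤ K) {t : ℝ} (ht : |t| ≤ X) :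
    trapezoid X K t = min 1 ((X - |t|) / K) :=
  max_eq_right <| le_min zero_le_one <| div_nonneg (by linarith) hK

lemma mul_trapezoid (hK : 0 < K) (hKX : K ≤ X) (t : ℝ) :
    K * trapezoid X K t =
      max (t + X) 0 - max (t + X - K) 0 - max (t - X + K) 0 + max (t - X) 0 := by
  rw [trapezoid, mul_max_of_nonneg _ _ hK.le, mul_min_of_nonneg _ _ hK.le, mul_one, mul_zero,
    mul_div_cancel₀ _ hK.ne']
  rcases abs_cases t with ⟨ht, _⟩ | ⟨ht, _⟩ <;> rw [ht] <;>
    simp only [max_def, min_def] <;> split_ifs <;> linarith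

end trapezoid

noncomputable def rampIncrement (δ t : ℝ) : ℝ := max (t + δ) 0 - max t 0

section rampIncrement

variable {δ : ℝ} (hδ : 0 ≤ δ)
include hδ

lemma rampIncrement_nonneg (t : ℝ) : 0 ≤ rampIncrement δ t := by
  simp only [rampIncrement, max_def]; split_ifs <;> linarith

lemma rampIncrement_le (t : ℝ) : rampIncrement δ t ≤ δ := by
  simp only [rampIncrement, max_def]; split_ifs <;> linarith

lemma monotone_rampIncrement : Monotone (rampIncrement δ) := by
  intro s t hst
  simp only [rampIncrement, max_def]; split_ifs <;> linarith

lemma monotone_rampIncrement_affine {d : ℝ} (hd : 0 ≤ d) (c : ℝ) :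
    Monotone fun m : ℤ => rampIncrement δ (c + d * m) :=
  (monotone_rampIncrement hδ).comp fun m n hmn => by
    have : (m : ℝ) ≤ n := by exact_mod_cast hmn
    gcongr

end rampIncrement

lemma sum_abs_le_of_mul_abs_le_sum_fwdDiff {ψ : ℤ → ℝ} {n : ℕ} {δ d K : ℝ} (hδ : 0 ≤ δ)
    (hK : 0 < K) (o : Fin n → ℝ)
    (hψ : ∀ m, K * |ψ m| ≤ ∑ i, Δ_[1] (fun m : ℤ => rampIncrement δ (o i + d * m)) m)
    (a b : ℤ) : ∑ m ∈ Icc a b, |ψ m| ≤ n * δ / K := by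
  rw [le_div_iff₀ hK, sum_mul]
  calc ∑ m ∈ Icc a b, |ψ m| * K
      ≤ ∑ m ∈ Icc a b, ∑ i, Δ_[1] (fun m : ℤ => rampIncrement δ (o i + d * m)) m :=
        sum_le_sum fun m _ => (mul_comm _ _).trans_le (hψ m)
    _ = ∑ i, ∑ m ∈ Icc a b, Δ_[1] (fun m : ℤ => rampIncrement δ (o i + d * m)) m := sum_comm
    _ ≤ ∑ _i : Fin n, δ := sum_le_sum fun i _ =>
        Int.sum_Icc_fwdDiff_le (fun _ => rampIncrement_nonneg hδ _)
          (fun _ => rampIncrement_le hδ _) a b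
    _ = n * δ := by simp

section affine

variable {X K d : ℝ} (hK : 0 < K) (hKX : K ≤ X) (hd : 0 ≤ d) (c : ℝ)
include hK hKX hd

lemma mul_abs_fwdDiff_trapezoid_affine_le (m : ℤ) :
    K * |Δ_[1] (fun m : ℤ => trapezoid X K (c + d * m)) m| ≤
      ∑ i, Δ_[1] (fun m : ℤ => rampIncrement K (![c + X - K, c - X] i + d * m)) m := by
  set P := fun m : ℤ => rampIncrement K (c + X - K + d * m)
  set Q := fun m : ℤ => rampIncrement K (c - X + d * m)
  have hP : 0 ≤ Δ_[1] P m :=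
    sub_nonneg.mpr (monotone_rampIncrement_affine hK.le hd _ (by omega : m ≤ m + 1))
  have hQ : 0 ≤ Δ_[1] Q m :=
    sub_nonneg.mpr (monotone_rampIncrement_affine hK.le hd _ (by omega : m ≤ m + 1))
  have key : K * Δ_[1] (fun m : ℤ => trapezoid X K (c + d * m)) m = Δ_[1] P m - Δ_[1] Q m := by
    have h0 := mul_trapezoid hK hKX (c + d * m)
    have h1 := mul_trapezoid hK hKX (c + d * (m + 1 : ℤ))
    simp only [fwdDiff, P, Q, rampIncrement]
    push_cast at h1 ⊢
    ring_nf at h0 h1 ⊢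
    linarith
  calc K * |Δ_[1] (fun m : ℤ => trapezoid X K (c + d * m)) m| = |Δ_[1] P m - Δ_[1] Q m| := by
        rw [← key, abs_mul, abs_of_pos hK]
    _ ≤ Δ_[1] P m + Δ_[1] Q m := abs_le.mpr ⟨by linarith, by linarith⟩
    _ = _ := by rw [Fin.sum_univ_two]; rfl

lemma mul_abs_fwdDiff_fwdDiff_trapezoid_affine_le (m : ℤ) :
    K * |Δ_[1] (Δ_[1] fun m : ℤ => trapezoid X K (c + d * m)) m| ≤
      ∑ i, Δ_[1]
        (fun m : ℤ => rampIncrement d (![c + X, c + X - K, c - X + K, c - X] i + d * m)) m := by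
  set G := fun (o : ℝ) (m : ℤ) => rampIncrement d (o + d * m)
  have hG : ∀ o, 0 ≤ Δ_[1] (G o) m := fun o =>
    sub_nonneg.mpr (monotone_rampIncrement_affine hd hd o (by omega : m ≤ m + 1))
  have key : K * Δ_[1] (Δ_[1] fun m : ℤ => trapezoid X K (c + d * m)) m =
      Δ_[1] (G (c + X)) m - Δ_[1] (G (c + X - K)) m - Δ_[1] (G (c - X + K)) m +
        Δ_[1] (G (c - X)) m := by
    have h0 := mul_trapezoid hK hKX (c + d * m)
    have h1 := mul_trapezoid hK hKX (c + d * (m + 1 : ℤ))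
    have h2 := mul_trapezoid hK hKX (c + d * (m + 1 + 1 : ℤ))
    simp only [fwdDiff, G, rampIncrement]
    push_cast at h1 h2 ⊢
    ring_nf at h0 h1 h2 ⊢
    linarith
  have h₁ := hG (c + X)
  have h₂ := hG (c + X - K)
  have h₃ := hG (c - X + K)
  have h₄ := hG (c - X)
  calc K * |Δ_[1] (Δ_[1] fun m : ℤ => trapezoid X K (c + d * m)) m|
      = |Δ_[1] (G (c + X)) m - Δ_[1] (G (c + X - K)) m - Δ_[1] (G (c - X + K)) m +
          Δ_[1] (G (c - X)) m| := by
        rw [← key, abs_mul, abs_of_pos hK]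
    _ ≤ Δ_[1] (G (c + X)) m + Δ_[1] (G (c + X - K)) m + Δ_[1] (G (c - X + K)) m +
          Δ_[1] (G (c - X)) m := abs_le.mpr ⟨by linarith, by linarith⟩
    _ = _ := by rw [Fin.sum_univ_four]; rfl

lemma sum_abs_fwdDiff_trapezoid_affine_le (a b : ℤ) :
    ∑ m ∈ Icc a b, |Δ_[1] (fun m : ℤ => trapezoid X K (c + d * m)) m| ≤ 2 := by
  have := sum_abs_le_of_mul_abs_le_sum_fwdDiff hK.le hK _
    (mul_abs_fwdDiff_trapezoid_affine_le hK hKX hd c) a b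
  rwa [Nat.cast_two, mul_div_cancel_right₀ _ hK.ne'] at this

lemma sum_abs_fwdDiff_fwdDiff_trapezoid_affine_le (a b : ℤ) :
    ∑ m ∈ Icc a b, |Δ_[1] (Δ_[1] fun m : ℤ => trapezoid X K (c + d * m)) m| ≤ 4 * d / K := by
  exact_mod_cast sum_abs_le_of_mul_abs_le_sum_fwdDiff hd hK _
    (mul_abs_fwdDiff_fwdDiff_trapezoid_affine_le hK hKX hd c) a b

end affine

lemma sum_abs_trapezoid_affine_le {X K d : ℝ} (hK : 0 ≤ K) (hX : 0 ≤ X) (hd : 0 < d) (c : ℝ)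
    (s : Finset ℤ) : ∑ m ∈ s, |trapezoid X K (c + d * m)| ≤ 2 * (X / d) + 1 := by
  set I := Icc ⌈(-X - c) / d⌉ ⌊(X - c) / d⌋
  have hsupp : ∀ m : ℤ, trapezoid X K (c + d * m) ≠ 0 → m ∈ I := by
    intro m hm
    obtain ⟨h₁, h₂⟩ := abs_lt.mp (abs_lt_of_trapezoid_ne_zero hK hm)
    rw [mem_Icc, Int.ceil_le, Int.le_floor, div_le_iff₀ hd, le_div_iff₀ hd]
    constructor <;> linarith
  calc ∑ m ∈ s, |trapezoid X K (c + d * m)| ≤ ∑ m ∈ s, if m ∈ I then 1 else 0 := by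
        refine sum_le_sum fun m _ => ?_
        split_ifs with h
        · exact (abs_of_nonneg (trapezoid_nonneg _)).trans_le (trapezoid_le_one _)
        · rw [not_imp_comm.mp (hsupp m) h, abs_zero]
    _ = #{m ∈ s | m ∈ I} := by rw [sum_boole]
    _ ≤ #I := by exact_mod_cast card_le_card fun m hm => (mem_filter.mp hm).2
    _ ≤ (X - c) / d - (-X - c) / d + 1 := card_Icc_ceil_floor_le (by gcongr; linarith)
    _ = 2 * (X / d) + 1 := by ring

lemma Eker_eq_e_mul_expSum {N : ℕ} {K : ℝ} (hK : 0 < K) {M d : ℤ} (hd : 1 ≤ d) {R : ℤ}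
    (hR : ⌊(N : ℝ) + K⌋ + |M| ≤ R) (α : ℝ) :
    Eker N K M d α =
      e (α * M) * expSum (fun m => trapezoid (N + K) K (M + d * m)) (d * α) (-R) R := by
  set X : ℝ := N + K
  have hweight : ∀ n : ℤ, |n| ≤ ⌊X⌋ → min 1 ((X - |(n : ℝ)|) / K) = trapezoid X K n := fun n hn =>
    (trapezoid_eq_min hK.le (by rw [← Int.cast_abs]; exact Int.le_floor.mp hn)).symm
  have hterm : ∀ m : ℤ, e (α * M) * ((trapezoid X K (M + d * m) : ℂ) * e (d * α * m)) =
      (trapezoid X K (M + d * m : ℤ) : ℂ) * e (α * (M + d * m : ℤ)) := fun m => by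
    push_cast
    rw [show α * (M + d * m) = α * M + d * α * m by ring, e_add]
    ring
  have hsupp : ∀ m : ℤ, e (α * M) * ((trapezoid X K (M + d * m) : ℂ) * e (d * α * m)) ≠ 0 →
      |M + d * m| ≤ ⌊X⌋ := fun m hm =>
    abs_le_floor_of_trapezoid_ne_zero hK.le (by push_cast; exact fun h => hm (by simp [h]))
  rw [Eker, expSum, mul_sum]
  symm
  refine sum_bij_ne_zero (fun m _ _ => M + d * m) ?_ ?_ ?_ ?_
  · intro m _ hm
    exact mem_filter.mpr ⟨mem_Icc.mpr (abs_le.mp (hsupp m hm)), m, by ring⟩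
  · intro m₁ _ _ m₂ _ _ h
    simpa [(show d ≠ 0 by omega)] using h
  · intro n hn hn0
    obtain ⟨hnI, q, hq⟩ := mem_filter.mp hn
    have hnX : |n| ≤ ⌊X⌋ := abs_le.mpr (mem_Icc.mp hnI)
    have hnq : n = M + d * q := by omega
    have hqR := Int.abs_le_of_abs_add_mul_le hd (hnq ▸ hnX)
    refine ⟨q, mem_Icc.mpr (abs_le.mp (by omega)), ?_, hnq.symm⟩
    rwa [hterm q, ← hnq, ← hweight n hnX]
  · intro m _ hm
    rw [hterm, hweight _ (hsupp m hm)]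

open Classical in
theorem congruence_kernel_bound_general :
    ∃ C : ℝ, 0 < C ∧ ∀ K : ℝ, 1 ≤ K → ∀ N : ℕ, 1 ≤ N → ∀ M d : ℤ,
      1 ≤ M → (M : ℝ) ≤ (N : ℝ) + K → 1 ≤ d → (d : ℝ) ≤ (N : ℝ) + K → ∀ α : ℝ,
      ‖Eker N K M d α‖ ≤ C *
        ((if ∃ z : ℤ, (d : ℝ) * α = (z : ℝ) then ((N : ℝ) + K) / (d : ℝ)
          else min (((N : ℝ) + K) / (d : ℝ))
            (min (1 / nint ((d : ℝ) * α))
              ((d : ℝ) / (K * nint ((d : ℝ) * α) ^ 2)))) + 1) := by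
  refine ⟨2, two_pos, fun K hK N _ M d _ _ hd _ α => ?_⟩
  have hK0 : 0 < K := by linarith
  have hd0 : (0 : ℝ) < d := by exact_mod_cast hd
  rw [Eker_eq_e_mul_expSum hK0 hd (R := ⌊(N : ℝ) + K⌋ + |M| + 2) (by omega) α, norm_mul, norm_e,
    one_mul]
  set X : ℝ := N + K
  have hKX : K ≤ X := le_add_of_nonneg_left N.cast_nonneg
  set R := ⌊X⌋ + |M| + 2
  set S := expSum (fun m => trapezoid X K (M + d * m)) (d * α) (-R) R
  have htriv : ‖S‖ ≤ 2 * (X / d) + 1 :=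
    (norm_expSum_le _ _).trans (sum_abs_trapezoid_affine_le hK0.le (by linarith) hd0 M _)
  split_ifs with hint
  · linarith
  set η := nint (d * α)
  have hη : 0 < η := nint_pos hint
  have hS := norm_expSum_le_min _ _ (a := -R) (b := R) (fun m hm => by
      have := abs_le.mp <| Int.abs_le_of_abs_add_mul_le hd <|
        abs_le_floor_of_trapezoid_ne_zero hK0.le (by push_cast; exact hm)
      exact mem_Icc.mpr ⟨by omega, by omega⟩)
    (sum_abs_fwdDiff_trapezoid_affine_le hK0 hKX hd0.le M _ _)
    (sum_abs_fwdDiff_fwdDiff_trapezoid_affine_le hK0 hKX hd0.le M _ _) hη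
  rw [le_min_iff, show 2 / (4 * η) = 1 / η / 2 by ring,
    show 4 * d / K / (4 * η) ^ 2 = d / (K * η ^ 2) / 4 by ring] at hS
  have : 0 ≤ 1 / η := one_div_nonneg.mpr hη.le
  have : 0 ≤ d / (K * η ^ 2) := by positivity
  suffices ‖S‖ / 2 - 1 ≤ min (X / d) (min (1 / η) (d / (K * η ^ 2))) by linarith
  exact le_min (by linarith) (le_min (by linarith) (by linarith))

open Classical in
theorem congruence_kernel_bound (k : ℕ) (hk : 2 ≤ k) :
    ∃ C : ℝ, 0 < C ∧ ∀ K : ℝ, 1 ≤ K → ∀ N : ℕ, 1 ≤ N → ∀ M d : ℤ,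
      1 ≤ M → (M : ℝ) ≤ (N : ℝ) + K → 1 ≤ d → (d : ℝ) ≤ (N : ℝ) + K → ∀ α : ℝ,
      ‖Eker N K M d α‖ ≤ C *
        ((if ∃ z : ℤ, (d : ℝ) * α = (z : ℝ) then ((N : ℝ) + K) / (d : ℝ)
          else min (((N : ℝ) + K) / (d : ℝ))
            (min (1 / nint ((d : ℝ) * α))
              ((d : ℝ) / (K * nint ((d : ℝ) * α) ^ 2)))) + 1) :=
  congruence_kernel_bound_general
end
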